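/- arXiv:1504.00427 — 2 statements merged into one kernel-verified Lean document; each statement's English description precedes it below -/
import Mathlib

section
/- Let (V,d,b) be an acyclic information network, let A, Â ⊆ V\{d} be disjoint transient and permanent initial sets, and let v be a non-void node of V and 1 ≤ t ≤ T. Then E[X^t_v(A,Â)] = ∑_{u∈A} (b̄^t) v u + ∑_{y∈Â} ∑_{i=0}^{t} (b̄^i) v y, where b̄ is the transition matrix of the transformed network Ḡ(Â). -/
open MeasureTheory

/-- An information network: a finite node set `V` with a distinguished void node `d`
and a row-stochastic weight matrix `b` with entries in `[0,1]` and `b d d = 1`. -/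
structure InfoNetwork (V : Type*) [Fintype V] where
  d : V
  b : V → V → ℝ
  b_nonneg : ∀ v u, 0 ≤ b v u
  b_le_one : ∀ v u, b v u ≤ 1
  row_sum : ∀ v, ∑ u, b v u = 1
  void_loop : b d d = 1

/-- The uniform probability measure on the interval `(0,1)`. -/
noncomputable def unifMeasure : Measure ℝ := volume.restrict (Set.Ioo (0:ℝ) 1)

/-- Product over `V` of uniform measures on `(0,1)`: the distribution of the thresholds. -/
noncomputable def thresholdMeasure (V : Type*) [Fintype V] : Measure (V → ℝ) :=
  Measure.pi fun _ : V => unifMeasure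

namespace InfoNetwork

variable {V : Type*} [Fintype V]

/-- The set of active nodes at time `t` under the non-progressive linear threshold model,
with transient initial set `A`, permanent initial set `Ahat` and thresholds `θ`. -/
noncomputable def activeSet (N : InfoNetwork V) (A Ahat : Set V) (θ : V → ℝ) : ℕ → Set V
  | 0 => A ∪ Ahat
  | t+1 => Ahat ∪
      {v | v ∉ Ahat ∧ θ v ≤ ∑ u, (N.activeSet A Ahat θ t).indicator (N.b v) u}

/-- `E[X^t_v(A,Ahat)]`: the probability (over the random thresholds) that `v` is active
at time `t`. -/
noncomputable def EX (N : InfoNetwork V) (A Ahat : Set V) (t : ℕ) (v : V) : ℝ :=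
  (thresholdMeasure V {θ | v ∈ N.activeSet A Ahat θ t}).toReal

/-- The expected influence over the period `[1,T]`. -/
noncomputable def sigmaBar (N : InfoNetwork V) (T : ℕ) (A Ahat : Set V) : ℝ :=
  (1 / (T : ℝ)) * ∑ t ∈ Finset.Icc 1 T, ∑ v, N.EX A Ahat t v

/-- The edge relation of the directed graph on `V \ {d}`. -/
def edgeRel (N : InfoNetwork V) (v u : V) : Prop :=
  v ≠ N.d ∧ u ≠ N.d ∧ 0 < N.b v u

/-- The network is acyclic if the directed graph on `V \ {d}` has no directed cycle. -/
def Acyclic (N : InfoNetwork V) : Prop :=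
  ∀ v, ¬ Relation.TransGen N.edgeRel v v

end InfoNetwork

/-- A real-valued set function `f` is submodular on the ground set `S`. -/
def SubmodularOn {V : Type*} (S : Set V) (f : Set V → ℝ) : Prop :=
  ∀ A B : Set V, A ⊆ B → B ⊆ S → ∀ w ∈ S, w ∉ B →
    f (insert w B) - f B ≤ f (insert w A) - f A

open scoped Classical

/-- The weight matrix of the transformed network `Ḡ(Â)` on the node set `V ⊕ V × Fin T`,
where `Sum.inr (y, i)` denotes the `(i+1)`-st dummy node of the chain attached to `y`
(meaningful for `y ∈ Ahat`). -/
noncomputable def transB {V : Type*} [Fintype V] (N : InfoNetwork V) (T : ℕ) (Ahat : Set V) :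
    V ⊕ V × Fin T → V ⊕ V × Fin T → ℝ
  | Sum.inl v, Sum.inl u => if v ∈ Ahat then 0 else N.b v u
  | Sum.inl v, Sum.inr yi => if v ∈ Ahat ∧ yi.1 = v ∧ (yi.2 : ℕ) = 0 then 1 else 0
  | Sum.inr yi, Sum.inl u => if (yi.2 : ℕ) = T - 1 ∧ u = N.d then 1 else 0
  | Sum.inr yi, Sum.inr yj => if yj.1 = yi.1 ∧ (yj.2 : ℕ) = (yi.2 : ℕ) + 1 then 1 else 0

/-- The transformed network `Ḡ(Â)`: every `y ∈ Ahat` has its outgoing weight replaced by a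
single weight-1 edge to its first dummy node; the dummy nodes of each chain point to the
next one with weight 1, and the last dummy node of a chain points to the void node `d`. -/
noncomputable def transNet {V : Type*} [Fintype V] (N : InfoNetwork V) (T : ℕ) (hT : 1 ≤ T)
    (Ahat : Set V) (hd : N.d ∉ Ahat) : InfoNetwork (V ⊕ V × Fin T) where
  d := Sum.inl N.d
  b := transB N T Ahat
  b_nonneg := by
    rintro (v | yi) (u | yj) <;> simp only [transB] <;> split_ifs <;>
      simp [N.b_nonneg]
  b_le_one := by
    rintro (v | yi) (u | yj) <;> simp only [transB] <;> split_ifs <;>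
      simp [N.b_le_one]
  row_sum := by
    rintro (v | ⟨y, i⟩) <;> rw [Fintype.sum_sum_type] <;> simp only [transB]
    · by_cases hv : v ∈ Ahat
      · have h0 : 0 < T := hT
        have e1 : (∑ u : V, if v ∈ Ahat then (0:ℝ) else N.b v u) = 0 := by simp [hv]
        have e2 : (∑ yi : V × Fin T,
            if v ∈ Ahat ∧ yi.1 = v ∧ (yi.2 : ℕ) = 0 then (1:ℝ) else 0) = 1 := by
          rw [Finset.sum_eq_single ((v, ⟨0, h0⟩) : V × Fin T)]
          · simp [hv]
          · rintro ⟨a, b⟩ - hne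
            rw [if_neg]
            rintro ⟨-, h1, h2⟩
            exact hne (by simp only [Prod.mk.injEq]; exact ⟨h1, Fin.ext h2⟩)
          · intro h
            exact absurd (Finset.mem_univ _) h
        rw [e1, e2]
        norm_num
      · have e1 : (∑ u : V, if v ∈ Ahat then (0:ℝ) else N.b v u) = 1 := by
          simp [hv, N.row_sum v]
        have e2 : (∑ yi : V × Fin T,
            if v ∈ Ahat ∧ yi.1 = v ∧ (yi.2 : ℕ) = 0 then (1:ℝ) else 0) = 0 := by
          simp [hv]
        rw [e1, e2]
        norm_num
    · by_cases hi : (i : ℕ) = T - 1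
      · have e1 : (∑ u : V, if (i : ℕ) = T - 1 ∧ u = N.d then (1:ℝ) else 0) = 1 := by
          simp [hi]
        have e2 : (∑ yj : V × Fin T,
            if yj.1 = y ∧ (yj.2 : ℕ) = (i : ℕ) + 1 then (1:ℝ) else 0) = 0 := by
          apply Finset.sum_eq_zero
          rintro ⟨a, b⟩ -
          rw [if_neg]
          rintro ⟨-, hb⟩
          have hb2 := b.2
          omega
        rw [e1, e2]
        norm_num
      · have hlt : (i : ℕ) + 1 < T := by
          have := i.2
          omega
        have e1 : (∑ u : V, if (i : ℕ) = T - 1 ∧ u = N.d then (1:ℝ) else 0) = 0 := by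
          simp [hi]
        have e2 : (∑ yj : V × Fin T,
            if yj.1 = y ∧ (yj.2 : ℕ) = (i : ℕ) + 1 then (1:ℝ) else 0) = 1 := by
          rw [Finset.sum_eq_single ((y, ⟨(i : ℕ) + 1, hlt⟩) : V × Fin T)]
          · simp
          · rintro ⟨a, b⟩ - hne
            rw [if_neg]
            rintro ⟨h1, h2⟩
            exact hne (by simp only [Prod.mk.injEq]; exact ⟨h1, Fin.ext h2⟩)
          · intro h
            exact absurd (Finset.mem_univ _) h
        rw [e1, e2]
        norm_num
  void_loop := by
    simp only [transB]
    rw [if_neg hd]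
    exact N.void_loop

/-- The absorbing modification `M_Â` of `b`: row `v` equals row `v` of `b` when `v ∉ Ahat`
and equals the standard basis row `e_v` when `v ∈ Ahat`. -/
noncomputable def absorbing {V : Type*} [Fintype V] [DecidableEq V] (N : InfoNetwork V)
    (Ahat : Set V) : Matrix V V ℝ :=
  Matrix.of fun v u => if v ∈ Ahat then (if u = v then 1 else 0) else N.b v u


/-! ### Auxiliary development -/

section AuxMeasure

open MeasureTheory

instance : IsProbabilityMeasure unifMeasure :=
  ⟨by simp [unifMeasure, Real.volume_Ioo]⟩

instance (V : Type*) [Fintype V] : IsProbabilityMeasure (thresholdMeasure V) := by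
  unfold thresholdMeasure; infer_instance

lemma unifMeasure_Iic {c : ℝ} (h0 : 0 ≤ c) (h1 : c ≤ 1) :
    unifMeasure (Set.Iic c) = ENNReal.ofReal c := by
  rw [unifMeasure, Measure.restrict_apply measurableSet_Iic]
  rcases eq_or_lt_of_le h1 with rfl | h
  · have h2 : Set.Iic (1:ℝ) ∩ Set.Ioo (0:ℝ) 1 = Set.Ioo 0 1 := by
      ext x
      simp only [Set.mem_inter_iff, Set.mem_Iic, Set.mem_Ioo]
      constructor
      · rintro ⟨-, h⟩; exact h
      · intro h; exact ⟨h.2.le, h⟩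
    rw [h2, Real.volume_Ioo]
    norm_num
  · have h2 : Set.Iic c ∩ Set.Ioo (0:ℝ) 1 = Set.Ioc 0 c := by
      ext x
      simp only [Set.mem_inter_iff, Set.mem_Iic, Set.mem_Ioo, Set.mem_Ioc]
      constructor
      · rintro ⟨hc, hx0, -⟩; exact ⟨hx0, hc⟩
      · rintro ⟨hx0, hc⟩; exact ⟨hc, hx0, lt_of_le_of_lt hc h⟩
    rw [h2, Real.volume_Ioc, sub_zero]

lemma thresholdMeasure_eval_le_zero (V : Type*) [Fintype V] (x : V) :
    thresholdMeasure V {θ : V → ℝ | θ x ≤ 0} = 0 := by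
  classical
  have hset : {θ : V → ℝ | θ x ≤ 0}
      = Set.pi Set.univ (fun w => if w = x then Set.Iic (0:ℝ) else Set.univ) := by
    ext θ
    simp only [Set.mem_setOf_eq, Set.mem_pi, Set.mem_univ, true_implies]
    constructor
    · intro h w
      by_cases hw : w = x
      · subst hw; simp [h]
      · simp [hw]
    · intro h
      have := h x
      simpa using this
  rw [thresholdMeasure, hset, Measure.pi_pi]
  apply Finset.prod_eq_zero (Finset.mem_univ x)
  have hz : unifMeasure (Set.Iic (0:ℝ)) = 0 := by
    rw [unifMeasure, Measure.restrict_apply measurableSet_Iic]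
    have he : Set.Iic (0:ℝ) ∩ Set.Ioo 0 1 = ∅ := by
      apply Set.eq_empty_iff_forall_notMem.mpr
      intro y hy
      simp only [Set.mem_inter_iff, Set.mem_Iic, Set.mem_Ioo] at hy
      linarith [hy.1, hy.2.1]
    rw [he]
    simp
  simpa using hz

lemma measure_le_eq_lintegral {V : Type*} [Fintype V] (v : V) (f : (V → ℝ) → ℝ)
    (hf : Measurable f) (h0 : ∀ θ, 0 ≤ f θ) (h1 : ∀ θ, f θ ≤ 1)
    (hind : ∀ θ x, f (Function.update θ v x) = f θ) :
    thresholdMeasure V {θ | θ v ≤ f θ}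
      = ∫⁻ θ, ENNReal.ofReal (f θ) ∂(thresholdMeasure V) := by
  classical
  haveI : Unique {i : V // i = v} := ⟨⟨⟨v, rfl⟩⟩, fun a => Subtype.ext a.2⟩
  letI : Fintype {i : V // i = v} := Subtype.fintype (fun i : V => i = v)
  have hmp := measurePreserving_piEquivPiSubtypeProd (fun _ : V => unifMeasure) (fun i => i = v)
  set e := MeasurableEquiv.piEquivPiSubtypeProd (fun _ : V => ℝ) (fun i => i = v) with he
  have hmps := MeasureTheory.MeasurePreserving.symm e hmp
  have happ : ∀ (ab : ({i : V // i = v} → ℝ) × ({i : V // ¬ i = v} → ℝ)) (i : V),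
      e.symm ab i = if h : i = v then ab.1 ⟨i, h⟩ else ab.2 ⟨i, h⟩ := fun ab i => rfl
  have hupdate : ∀ (a : {i : V // i = v} → ℝ) (b : {i : V // ¬ i = v} → ℝ),
      e.symm (a, b) = Function.update (e.symm (fun _ => (0:ℝ), b)) v (a ⟨v, rfl⟩) := by
    intro a b
    funext i
    by_cases hi : i = v
    · subst hi
      rw [happ, dif_pos rfl, Function.update_self]
    · rw [happ, dif_neg hi, Function.update_of_ne hi, happ, dif_neg hi]
  have hev : ∀ a b, e.symm (a, b) v = a ⟨v, rfl⟩ := by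
    intro a b; rw [hupdate, Function.update_self]
  have hfe : ∀ a b, f (e.symm (a, b)) = f (e.symm (fun _ => (0:ℝ), b)) := by
    intro a b; rw [hupdate, hind]
  set F : ({i : V // ¬ i = v} → ℝ) → ℝ := fun b => f (e.symm (fun _ => (0:ℝ), b)) with hF
  have hFmeas : Measurable F :=
    hf.comp (e.symm.measurable.comp (measurable_const.prodMk measurable_id))
  have hF0 : ∀ b, 0 ≤ F b := fun b => h0 _
  have hF1 : ∀ b, F b ≤ 1 := fun b => h1 _
  have hE : MeasurableSet {θ : V → ℝ | θ v ≤ f θ} :=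
    measurableSet_le (measurable_pi_apply v) hf
  have hSset : e.symm ⁻¹' {θ : V → ℝ | θ v ≤ f θ}
      = {p : ({i : V // i = v} → ℝ) × ({i : V // ¬ i = v} → ℝ) | p.1 ⟨v, rfl⟩ ≤ F p.2} := by
    ext ⟨a, b⟩
    simp only [Set.mem_preimage, Set.mem_setOf_eq]
    rw [hev, hfe]
  have hSm : MeasurableSet
      {p : ({i : V // i = v} → ℝ) × ({i : V // ¬ i = v} → ℝ) | p.1 ⟨v, rfl⟩ ≤ F p.2} :=
    measurableSet_le (by exact measurable_fst.eval) (by exact hFmeas.comp measurable_snd)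
  have hcong : ∀ p : ({i : V // i = v} → ℝ) × ({i : V // ¬ i = v} → ℝ),
      ENNReal.ofReal (f (e.symm p)) = ENNReal.ofReal (F p.2) := by
    rintro ⟨a, b⟩
    rw [hfe]
  unfold thresholdMeasure
  rw [← hmps.measure_preimage hE.nullMeasurableSet,
    ← MeasureTheory.MeasurePreserving.lintegral_comp hmps hf.ennreal_ofReal,
    hSset, MeasureTheory.Measure.prod_apply_symm hSm]
  refine Eq.trans (lintegral_congr (g := fun b => ENNReal.ofReal (F b)) fun b => ?_) ?_
  · -- slice measure equals ofReal (F b)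
    have hpre : ((fun a => (a, b)) ⁻¹'
          {p : ({i : V // i = v} → ℝ) × ({i : V // ¬ i = v} → ℝ) | p.1 ⟨v, rfl⟩ ≤ F p.2})
        = Set.pi Set.univ (fun _ : {i : V // i = v} => Set.Iic (F b)) := by
      ext a
      simp only [Set.mem_preimage, Set.mem_setOf_eq, Set.mem_pi, Set.mem_univ,
        true_implies, Set.mem_Iic]
      constructor
      · intro h i
        rw [Subsingleton.elim i (⟨v, rfl⟩ : {i : V // i = v})]
        exact h
      · intro h
        exact h ⟨v, rfl⟩
    rw [hpre, MeasureTheory.Measure.pi_pi, Finset.prod_const, Finset.card_univ,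
      Fintype.card_unique, pow_one]
    exact unifMeasure_Iic (hF0 b) (hF1 b)
  · refine Eq.symm (Eq.trans (lintegral_congr hcong) ?_)
    rw [← MeasureTheory.lintegral_map hFmeas.ennreal_ofReal measurable_snd,
      MeasureTheory.Measure.map_snd_prod, measure_univ, one_smul]

end AuxMeasure

section AuxNet

open MeasureTheory

namespace InfoNetwork

variable {V : Type*} [Fintype V] (N : InfoNetwork V) (A Ahat : Set V)

lemma bd_eq_zero {u : V} (hu : u ≠ N.d) : N.b N.d u = 0 := by
  classical
  have h1 : N.b N.d N.d + ∑ w ∈ Finset.univ.erase N.d, N.b N.d w = 1 := by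
    rw [Finset.add_sum_erase _ _ (Finset.mem_univ N.d)]
    exact N.row_sum N.d
  rw [N.void_loop] at h1
  have h2 : ∑ w ∈ Finset.univ.erase N.d, N.b N.d w = 0 := by linarith
  have h3 := (Finset.sum_eq_zero_iff_of_nonneg (fun w _ => N.b_nonneg N.d w)).mp h2
  exact h3 u (Finset.mem_erase.mpr ⟨hu, Finset.mem_univ u⟩)

lemma Ahat_subset_activeSet (θ : V → ℝ) (t : ℕ) : Ahat ⊆ N.activeSet A Ahat θ t := by
  cases t with
  | zero => exact Set.subset_union_right
  | succ t => exact Set.subset_union_left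

lemma d_not_active (hdA : N.d ∉ A) (hdAhat : N.d ∉ Ahat) {θ : V → ℝ}
    (hθ : 0 < θ N.d) : ∀ t, N.d ∉ N.activeSet A Ahat θ t := by
  intro t
  induction t with
  | zero =>
    rintro (h | h)
    exacts [hdA h, hdAhat h]
  | succ t ih =>
    rintro (h | ⟨-, hle⟩)
    · exact hdAhat h
    · have hz : ∑ u, (N.activeSet A Ahat θ t).indicator (N.b N.d) u = 0 := by
        apply Finset.sum_eq_zero
        intro u _
        by_cases hu : u = N.d
        · subst hu
          exact Set.indicator_of_notMem ih _
        · rw [Set.indicator_apply]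
          split_ifs
          · exact N.bd_eq_zero hu
          · rfl
      rw [hz] at hle
      linarith

lemma mem_activeSet_congr (hdA : N.d ∉ A) (hdAhat : N.d ∉ Ahat) (t : ℕ) :
    ∀ (v : V), v ≠ N.d → v ∉ Ahat → ∀ (θ θ' : V → ℝ), 0 < θ N.d → 0 < θ' N.d →
      (∀ u, (u = v ∨ Relation.TransGen N.edgeRel v u) → θ u = θ' u) →
      (v ∈ N.activeSet A Ahat θ t ↔ v ∈ N.activeSet A Ahat θ' t) := by
  induction t with
  | zero => intro v _ _ θ θ' _ _ _; simp [activeSet]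
  | succ t ih =>
    intro v hvd hvA θ θ' hθ hθ' hagree
    have hθv : θ v = θ' v := hagree v (Or.inl rfl)
    have hsum : ∑ u, (N.activeSet A Ahat θ t).indicator (N.b v) u
        = ∑ u, (N.activeSet A Ahat θ' t).indicator (N.b v) u := by
      apply Finset.sum_congr rfl
      intro u _
      rw [Set.indicator_apply, Set.indicator_apply]
      by_cases hb : N.b v u = 0
      · split_ifs <;> simp [hb]
      · by_cases huA : u ∈ Ahat
        · rw [if_pos (N.Ahat_subset_activeSet A Ahat θ t huA),
            if_pos (N.Ahat_subset_activeSet A Ahat θ' t huA)]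
        · by_cases hud : u = N.d
          · subst hud
            rw [if_neg (N.d_not_active A Ahat hdA hdAhat hθ t),
              if_neg (N.d_not_active A Ahat hdA hdAhat hθ' t)]
          · have hedge : N.edgeRel v u :=
              ⟨hvd, hud, lt_of_le_of_ne (N.b_nonneg v u) (Ne.symm hb)⟩
            have hiff := ih u hud huA θ θ' hθ hθ' (fun w hw => by
              apply hagree
              right
              rcases hw with rfl | hw
              · exact Relation.TransGen.single hedge
              · exact Relation.TransGen.head hedge hw)
            rw [if_congr hiff rfl rfl]
    simp only [activeSet, Set.mem_union, Set.mem_setOf_eq]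
    rw [hθv, hsum]

lemma measurable_weightSum (v : V) (t : ℕ)
    (hm : ∀ w, MeasurableSet {θ : V → ℝ | w ∈ N.activeSet A Ahat θ t}) :
    Measurable fun θ : V → ℝ => ∑ u, (N.activeSet A Ahat θ t).indicator (N.b v) u := by
  apply Finset.measurable_sum
  intro w _
  have hrw : (fun θ : V → ℝ => (N.activeSet A Ahat θ t).indicator (N.b v) w)
      = ({θ : V → ℝ | w ∈ N.activeSet A Ahat θ t}).indicator (fun _ => N.b v w) := by
    funext θ
    rw [Set.indicator_apply, Set.indicator_apply]
    simp only [Set.mem_setOf_eq]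
  rw [hrw]
  exact Measurable.indicator measurable_const (hm w)

lemma measurableSet_mem_activeSet (t : ℕ) (u : V) :
    MeasurableSet {θ : V → ℝ | u ∈ N.activeSet A Ahat θ t} := by
  induction t generalizing u with
  | zero =>
    by_cases h : u ∈ A ∪ Ahat
    · have heq : {θ : V → ℝ | u ∈ N.activeSet A Ahat θ 0} = Set.univ :=
        Set.eq_univ_of_forall fun θ => h
      rw [heq]; exact MeasurableSet.univ
    · have heq : {θ : V → ℝ | u ∈ N.activeSet A Ahat θ 0} = ∅ := by
        apply Set.eq_empty_iff_forall_notMem.mpr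
        intro θ hθ
        exact h hθ
      rw [heq]; exact MeasurableSet.empty
  | succ t ih =>
    by_cases h : u ∈ Ahat
    · have heq : {θ : V → ℝ | u ∈ N.activeSet A Ahat θ (t+1)} = Set.univ :=
        Set.eq_univ_of_forall fun θ => N.Ahat_subset_activeSet A Ahat θ (t+1) h
      rw [heq]; exact MeasurableSet.univ
    · have heq : {θ : V → ℝ | u ∈ N.activeSet A Ahat θ (t+1)}
          = {θ : V → ℝ | θ u ≤ ∑ w, (N.activeSet A Ahat θ t).indicator (N.b u) w} := by
        ext θ
        simp only [activeSet, Set.mem_union, Set.mem_setOf_eq]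
        constructor
        · rintro (hu | ⟨-, hu⟩)
          · exact absurd hu h
          · exact hu
        · intro hu
          exact Or.inr ⟨h, hu⟩
      rw [heq]
      exact measurableSet_le (measurable_pi_apply u) (N.measurable_weightSum A Ahat u t ih)

lemma EX_of_mem_Ahat (t : ℕ) {y : V} (hy : y ∈ Ahat) : N.EX A Ahat t y = 1 := by
  unfold EX
  have heq : {θ : V → ℝ | y ∈ N.activeSet A Ahat θ t} = Set.univ :=
    Set.eq_univ_of_forall fun θ => N.Ahat_subset_activeSet A Ahat θ t hy
  rw [heq, measure_univ, ENNReal.toReal_one]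

lemma EX_d (hdA : N.d ∉ A) (hdAhat : N.d ∉ Ahat) (t : ℕ) : N.EX A Ahat t N.d = 0 := by
  unfold EX
  have hsub : {θ : V → ℝ | N.d ∈ N.activeSet A Ahat θ t} ⊆ {θ : V → ℝ | θ N.d ≤ 0} := by
    intro θ hθ
    by_contra hc
    exact N.d_not_active A Ahat hdA hdAhat (not_le.mp (by simpa using hc)) t hθ
  rw [measure_mono_null hsub (thresholdMeasure_eval_le_zero V N.d)]
  simp

lemma EX_zero (hdisj : Disjoint A Ahat) (v : V) :
    N.EX A Ahat 0 v = (if v ∈ A then (1:ℝ) else 0) + (if v ∈ Ahat then 1 else 0) := by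
  classical
  unfold EX
  by_cases h : v ∈ A ∪ Ahat
  · have heq : {θ : V → ℝ | v ∈ N.activeSet A Ahat θ 0} = Set.univ :=
      Set.eq_univ_of_forall fun θ => h
    rw [heq, measure_univ, ENNReal.toReal_one]
    rcases h with h | h
    · rw [if_pos h, if_neg (Set.disjoint_left.mp hdisj h)]
      norm_num
    · rw [if_neg (Set.disjoint_right.mp hdisj h), if_pos h]
      norm_num
  · have heq : {θ : V → ℝ | v ∈ N.activeSet A Ahat θ 0} = ∅ := by
      apply Set.eq_empty_iff_forall_notMem.mpr
      intro θ hθ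
      exact h hθ
    have h1 : v ∉ A := fun hx => h (Or.inl hx)
    have h2 : v ∉ Ahat := fun hx => h (Or.inr hx)
    rw [heq, measure_empty, if_neg h1, if_neg h2]
    norm_num

lemma EX_succ (hdA : N.d ∉ A) (hdAhat : N.d ∉ Ahat) (hacyc : N.Acyclic)
    {v : V} (hvd : v ≠ N.d) (hvA : v ∉ Ahat) (t : ℕ) :
    N.EX A Ahat (t+1) v = ∑ w, N.b v w * N.EX A Ahat t w := by
  classical
  set g : (V → ℝ) → ℝ := fun θ => ∑ w, (N.activeSet A Ahat θ t).indicator (N.b v) w with hg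
  set f : (V → ℝ) → ℝ := fun θ => g (Function.update θ v (1/2)) with hf
  have hg0 : ∀ θ, 0 ≤ g θ := by
    intro θ
    apply Finset.sum_nonneg
    intro w _
    rw [Set.indicator_apply]
    split_ifs
    · exact N.b_nonneg v w
    · exact le_refl 0
  have hg1 : ∀ θ, g θ ≤ 1 := by
    intro θ
    calc g θ ≤ ∑ w, N.b v w := by
          apply Finset.sum_le_sum
          intro w _
          rw [Set.indicator_apply]
          split_ifs
          · exact le_refl _
          · exact N.b_nonneg v w
      _ = 1 := N.row_sum v
  have hgood : ∀ θ : V → ℝ, 0 < θ N.d → f θ = g θ := by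
    intro θ hθ
    have hθ' : 0 < Function.update θ v (1/2 : ℝ) N.d := by
      rwa [Function.update_of_ne (Ne.symm hvd)]
    apply Finset.sum_congr rfl
    intro w _
    rw [Set.indicator_apply, Set.indicator_apply]
    by_cases hb : N.b v w = 0
    · split_ifs <;> simp [hb]
    · by_cases hwA : w ∈ Ahat
      · rw [if_pos (N.Ahat_subset_activeSet A Ahat _ t hwA),
          if_pos (N.Ahat_subset_activeSet A Ahat θ t hwA)]
      · by_cases hwd : w = N.d
        · subst hwd
          rw [if_neg (N.d_not_active A Ahat hdA hdAhat hθ' t),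
            if_neg (N.d_not_active A Ahat hdA hdAhat hθ t)]
        · have hedge : N.edgeRel v w :=
            ⟨hvd, hwd, lt_of_le_of_ne (N.b_nonneg v w) (Ne.symm hb)⟩
          have hiff := N.mem_activeSet_congr A Ahat hdA hdAhat t w hwd hwA
            (Function.update θ v (1/2)) θ hθ' hθ (fun u hu => by
              have huv : u ≠ v := by
                intro heq
                subst heq
                apply hacyc u
                rcases hu with heq2 | hu
                · rw [← heq2] at hedge
                  exact Relation.TransGen.single hedge
                · exact Relation.TransGen.head hedge hu
              exact Function.update_of_ne huv _ _)
          rw [if_congr hiff rfl rfl]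
  have hgm : Measurable g :=
    N.measurable_weightSum A Ahat v t (fun w => N.measurableSet_mem_activeSet A Ahat t w)
  have hupd : Measurable fun θ : V → ℝ => Function.update θ v (1/2 : ℝ) := by
    apply measurable_pi_lambda
    intro i
    by_cases hi : i = v
    · subst hi
      simp only [Function.update_self]
      exact measurable_const
    · have hrw : (fun θ : V → ℝ => Function.update θ v (1/2 : ℝ) i) = fun θ => θ i :=
        funext fun θ => Function.update_of_ne hi _ _
      rw [hrw]
      exact measurable_pi_apply i
  have hfm : Measurable f := hgm.comp hupd
  have hf0 : ∀ θ, 0 ≤ f θ := fun θ => hg0 _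
  have hf1 : ∀ θ, f θ ≤ 1 := fun θ => hg1 _
  have hindf : ∀ θ x, f (Function.update θ v x) = f θ := by
    intro θ x
    simp only [hf, Function.update_idem]
  have hae : ∀ᵐ θ ∂(thresholdMeasure V), 0 < θ N.d := by
    rw [MeasureTheory.ae_iff]
    have hs : {θ : V → ℝ | ¬ 0 < θ N.d} = {θ : V → ℝ | θ N.d ≤ 0} := by
      ext θ; simp [not_lt]
    rw [hs]
    exact thresholdMeasure_eval_le_zero V N.d
  have hEv : {θ : V → ℝ | v ∈ N.activeSet A Ahat θ (t+1)} = {θ : V → ℝ | θ v ≤ g θ} := by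
    ext θ
    simp only [activeSet, Set.mem_union, Set.mem_setOf_eq]
    constructor
    · rintro (h | ⟨-, h⟩)
      · exact absurd h hvA
      · exact h
    · intro h
      exact Or.inr ⟨hvA, h⟩
  have hfg : {θ : V → ℝ | θ v ≤ g θ} =ᵐ[thresholdMeasure V] {θ : V → ℝ | θ v ≤ f θ} := by
    rw [Filter.eventuallyEq_set]
    filter_upwards [hae] with θ hθ
    rw [hgood θ hθ]
  have hmain : thresholdMeasure V {θ : V → ℝ | v ∈ N.activeSet A Ahat θ (t+1)}
      = ∑ w, ENNReal.ofReal (N.b v w)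
          * thresholdMeasure V {θ : V → ℝ | w ∈ N.activeSet A Ahat θ t} := by
    rw [hEv, measure_congr hfg, measure_le_eq_lintegral v f hfm hf0 hf1 hindf]
    have hfgint : (∫⁻ θ, ENNReal.ofReal (f θ) ∂(thresholdMeasure V))
        = ∫⁻ θ, ENNReal.ofReal (g θ) ∂(thresholdMeasure V) := by
      apply lintegral_congr_ae
      filter_upwards [hae] with θ hθ
      rw [hgood θ hθ]
    rw [hfgint]
    have hsplit : ∀ θ : V → ℝ, ENNReal.ofReal (g θ)
        = ∑ w, ({θ' : V → ℝ | w ∈ N.activeSet A Ahat θ' t}).indicator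
            (fun _ => ENNReal.ofReal (N.b v w)) θ := by
      intro θ
      rw [hg]
      rw [ENNReal.ofReal_sum_of_nonneg (fun w _ => by
        rw [Set.indicator_apply]
        split_ifs
        · exact N.b_nonneg v w
        · exact le_refl 0)]
      apply Finset.sum_congr rfl
      intro w _
      rw [Set.indicator_apply, Set.indicator_apply]
      simp only [Set.mem_setOf_eq]
      split_ifs
      · rfl
      · exact ENNReal.ofReal_zero
    rw [lintegral_congr hsplit, lintegral_finset_sum]
    · apply Finset.sum_congr rfl
      intro w _
      rw [lintegral_indicator (N.measurableSet_mem_activeSet A Ahat t w),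
        setLIntegral_const]
    · intro w _
      exact Measurable.indicator measurable_const (N.measurableSet_mem_activeSet A Ahat t w)
  unfold EX
  rw [hmain,
    ENNReal.toReal_sum (fun w _ =>
      ENNReal.mul_ne_top ENNReal.ofReal_ne_top (measure_ne_top (thresholdMeasure V) _))]
  apply Finset.sum_congr rfl
  intro w _
  rw [ENNReal.toReal_mul, ENNReal.toReal_ofReal (N.b_nonneg v w)]

end InfoNetwork

end AuxNet

section AuxMatrix

variable {V : Type*} [Fintype V] [DecidableEq V] (N : InfoNetwork V) (T : ℕ) (A Ahat : Set V)

lemma transB_row_d_apply (hd : N.d ∉ Ahat) (x : V ⊕ V × Fin T) :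
    Matrix.of (transB N T Ahat) (Sum.inl N.d) x = if x = Sum.inl N.d then 1 else 0 := by
  rcases x with u | yi
  · simp only [Matrix.of_apply, transB]
    rw [if_neg hd]
    by_cases hu : u = N.d
    · subst hu
      rw [N.void_loop, if_pos rfl]
    · rw [N.bd_eq_zero hu, if_neg (by simpa using hu)]
  · simp only [Matrix.of_apply, transB]
    rw [if_neg (fun h => hd h.1), if_neg (by simp)]

lemma pow_transB_row_d (hd : N.d ∉ Ahat) (s : ℕ) (x : V ⊕ V × Fin T) :
    (Matrix.of (transB N T Ahat) ^ s) (Sum.inl N.d) x = if x = Sum.inl N.d then 1 else 0 := by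
  induction s generalizing x with
  | zero =>
    by_cases hx : x = Sum.inl N.d
    · rw [pow_zero, hx, Matrix.one_apply_eq, if_pos rfl]
    · rw [pow_zero, Matrix.one_apply_ne (Ne.symm hx), if_neg hx]
  | succ s ih =>
    rw [pow_succ', Matrix.mul_apply]
    have hstep : ∑ z, Matrix.of (transB N T Ahat) (Sum.inl N.d) z
          * (Matrix.of (transB N T Ahat) ^ s) z x
        = ∑ z, (if z = Sum.inl N.d then (1:ℝ) else 0)
          * (Matrix.of (transB N T Ahat) ^ s) z x := by
      apply Finset.sum_congr rfl
      intro z _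
      rw [transB_row_d_apply N T Ahat hd z]
    rw [hstep]
    simp only [ite_mul, one_mul, zero_mul]
    rw [Finset.sum_ite_eq' Finset.univ (Sum.inl N.d)
      (fun z => (Matrix.of (transB N T Ahat) ^ s) z x), if_pos (Finset.mem_univ _)]
    exact ih x

lemma pow_transB_row_Ahat {y : V} (hy : y ∈ Ahat) :
    ∀ (i : ℕ) (hi : i < T) (x : V ⊕ V × Fin T),
      (Matrix.of (transB N T Ahat) ^ (i+1)) (Sum.inl y) x
        = if x = Sum.inr (y, ⟨i, hi⟩) then 1 else 0 := by
  intro i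
  induction i with
  | zero =>
    intro hi x
    rw [pow_one]
    rcases x with u | ⟨z, j⟩
    · simp only [Matrix.of_apply, transB]
      rw [if_pos hy, if_neg (by simp)]
    · simp only [Matrix.of_apply, transB]
      by_cases hzj : (z, j) = ((y, ⟨0, hi⟩) : V × Fin T)
      · have h1 : z = y := congrArg Prod.fst hzj
        have h2 : j = (⟨0, hi⟩ : Fin T) := congrArg Prod.snd hzj
        rw [if_pos ⟨hy, h1, by rw [h2]⟩, if_pos (by rw [hzj])]
      · rw [if_neg (fun hcond => hzj (Prod.ext hcond.2.1 (Fin.ext hcond.2.2))),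
          if_neg (by simpa using hzj)]
  | succ i ih =>
    intro hi x
    have hi' : i < T := Nat.lt_of_succ_lt hi
    rw [pow_succ, Matrix.mul_apply]
    have hstep : ∑ z, (Matrix.of (transB N T Ahat) ^ (i+1)) (Sum.inl y) z
          * Matrix.of (transB N T Ahat) z x
        = ∑ z, (if z = Sum.inr ((y, ⟨i, hi'⟩) : V × Fin T) then (1:ℝ) else 0)
          * Matrix.of (transB N T Ahat) z x := by
      apply Finset.sum_congr rfl
      intro z _
      rw [ih hi' z]
    rw [hstep]
    simp only [ite_mul, one_mul, zero_mul]
    rw [Finset.sum_ite_eq' Finset.univ (Sum.inr ((y, ⟨i, hi'⟩) : V × Fin T))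
      (fun z => Matrix.of (transB N T Ahat) z x), if_pos (Finset.mem_univ _)]
    rcases x with u | ⟨z, j⟩
    · simp only [Matrix.of_apply, transB]
      rw [if_neg (fun h => absurd (show i = T - 1 from h.1) (by omega)), if_neg (by simp)]
    · simp only [Matrix.of_apply, transB]
      by_cases hzj : (z, j) = ((y, ⟨i+1, hi⟩) : V × Fin T)
      · have h1 : z = y := congrArg Prod.fst hzj
        have h2 : j = (⟨i+1, hi⟩ : Fin T) := congrArg Prod.snd hzj
        rw [if_pos ⟨h1, by rw [h2]⟩, if_pos (by rw [hzj])]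
      · rw [if_neg (fun hcond => hzj (Prod.ext hcond.1 (Fin.ext hcond.2))),
          if_neg (by simpa using hzj)]

lemma pow_transB_Ahat_inl {y : V} (hy : y ∈ Ahat) {i : ℕ} (h1 : 1 ≤ i) (h2 : i ≤ T) (u : V) :
    (Matrix.of (transB N T Ahat) ^ i) (Sum.inl y) (Sum.inl u) = 0 := by
  obtain ⟨j, rfl⟩ : ∃ j, i = j + 1 := ⟨i - 1, by omega⟩
  rw [pow_transB_row_Ahat N T Ahat hy j (by omega) (Sum.inl u), if_neg (by simp)]

lemma pow_transB_succ_row {v : V} (hv : v ∉ Ahat) (s : ℕ) (u : V) :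
    (Matrix.of (transB N T Ahat) ^ (s+1)) (Sum.inl v) (Sum.inl u)
      = ∑ w, N.b v w * (Matrix.of (transB N T Ahat) ^ s) (Sum.inl w) (Sum.inl u) := by
  rw [pow_succ', Matrix.mul_apply, Fintype.sum_sum_type]
  have h2 : ∑ yi : V × Fin T, Matrix.of (transB N T Ahat) (Sum.inl v) (Sum.inr yi)
      * (Matrix.of (transB N T Ahat) ^ s) (Sum.inr yi) (Sum.inl u) = 0 := by
    apply Finset.sum_eq_zero
    intro yi _
    simp only [Matrix.of_apply, transB]
    rw [if_neg (fun h => hv h.1), zero_mul]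
  rw [h2, add_zero]
  apply Finset.sum_congr rfl
  intro w _
  simp only [Matrix.of_apply, transB]
  rw [if_neg hv]

lemma sum_if_delta {W : Type*} [Fintype W] (S : Set W) (v : W) (c : W → ℝ) :
    ∑ u, (if u ∈ S then (if u = v then c u else 0) else 0) = if v ∈ S then c v else 0 := by
  classical
  rw [Finset.sum_eq_single v]
  · simp
  · intro u _ hu
    simp [hu]
  · intro h
    exact absurd (Finset.mem_univ v) h

lemma sum_if_delta' {W : Type*} [Fintype W] (S : Set W) (v : W) (c : W → ℝ) :
    ∑ u, (if u ∈ S then (if v = u then c u else 0) else 0) = if v ∈ S then c v else 0 := by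
  classical
  rw [Finset.sum_eq_single v]
  · simp
  · intro u _ hu
    simp [Ne.symm hu]
  · intro h
    exact absurd (Finset.mem_univ v) h

lemma FF_first_rec {v : V} (hv : v ∉ Ahat) (t : ℕ) :
    (∑ u : V, A.indicator (fun u =>
        (Matrix.of (transB N T Ahat) ^ (t+1)) (Sum.inl v) (Sum.inl u)) u)
      = ∑ w, N.b v w * (∑ u : V, A.indicator (fun u =>
          (Matrix.of (transB N T Ahat) ^ t) (Sum.inl w) (Sum.inl u)) u) := by
  classical
  simp only [Set.indicator_apply]
  calc ∑ u, (if u ∈ A then (Matrix.of (transB N T Ahat) ^ (t+1)) (Sum.inl v) (Sum.inl u) else 0)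
      = ∑ u, ∑ w, (if u ∈ A
          then N.b v w * (Matrix.of (transB N T Ahat) ^ t) (Sum.inl w) (Sum.inl u) else 0) := by
        apply Finset.sum_congr rfl
        intro u _
        rw [pow_transB_succ_row N T Ahat hv t u]
        split_ifs with h
        · rfl
        · exact Finset.sum_const_zero.symm
    _ = ∑ w, ∑ u, (if u ∈ A
          then N.b v w * (Matrix.of (transB N T Ahat) ^ t) (Sum.inl w) (Sum.inl u) else 0) :=
        Finset.sum_comm
    _ = ∑ w, N.b v w * ∑ u, (if u ∈ A
          then (Matrix.of (transB N T Ahat) ^ t) (Sum.inl w) (Sum.inl u) else 0) := by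
        apply Finset.sum_congr rfl
        intro w _
        rw [Finset.mul_sum]
        apply Finset.sum_congr rfl
        intro u _
        split_ifs with h
        · rfl
        · rw [mul_zero]

lemma FF_second_rec {v : V} (hv : v ∉ Ahat) (t : ℕ) :
    (∑ y : V, Ahat.indicator (fun y => ∑ i ∈ Finset.range (t + 1 + 1),
        (Matrix.of (transB N T Ahat) ^ i) (Sum.inl v) (Sum.inl y)) y)
      = ∑ w, N.b v w * (∑ y : V, Ahat.indicator (fun y => ∑ i ∈ Finset.range (t + 1),
          (Matrix.of (transB N T Ahat) ^ i) (Sum.inl w) (Sum.inl y)) y) := by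
  classical
  simp only [Set.indicator_apply]
  calc ∑ y, (if y ∈ Ahat then ∑ i ∈ Finset.range (t + 1 + 1),
          (Matrix.of (transB N T Ahat) ^ i) (Sum.inl v) (Sum.inl y) else 0)
      = ∑ y, (if y ∈ Ahat then ∑ i ∈ Finset.range (t + 1), ∑ w,
          N.b v w * (Matrix.of (transB N T Ahat) ^ i) (Sum.inl w) (Sum.inl y) else 0) := by
        apply Finset.sum_congr rfl
        intro y _
        split_ifs with hy
        · rw [Finset.sum_range_succ']
          have h0 : (Matrix.of (transB N T Ahat) ^ 0) (Sum.inl v) (Sum.inl y) = 0 := by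
            rw [pow_zero]
            apply Matrix.one_apply_ne
            simp only [ne_eq, Sum.inl.injEq]
            rintro rfl
            exact hv hy
          rw [h0, add_zero]
          apply Finset.sum_congr rfl
          intro i _
          exact pow_transB_succ_row N T Ahat hv i y
        · rfl
    _ = ∑ y, ∑ w, (if y ∈ Ahat then
          N.b v w * ∑ i ∈ Finset.range (t + 1),
            (Matrix.of (transB N T Ahat) ^ i) (Sum.inl w) (Sum.inl y) else 0) := by
        apply Finset.sum_congr rfl
        intro y _
        split_ifs with hy
        · rw [Finset.sum_comm]
          apply Finset.sum_congr rfl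
          intro w _
          rw [Finset.mul_sum]
        · exact Finset.sum_const_zero.symm
    _ = ∑ w, ∑ y, (if y ∈ Ahat then
          N.b v w * ∑ i ∈ Finset.range (t + 1),
            (Matrix.of (transB N T Ahat) ^ i) (Sum.inl w) (Sum.inl y) else 0) :=
        Finset.sum_comm
    _ = ∑ w, N.b v w * ∑ y, (if y ∈ Ahat then ∑ i ∈ Finset.range (t + 1),
          (Matrix.of (transB N T Ahat) ^ i) (Sum.inl w) (Sum.inl y) else 0) := by
        apply Finset.sum_congr rfl
        intro w _
        rw [Finset.mul_sum]
        apply Finset.sum_congr rfl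
        intro y _
        split_ifs with hy
        · rfl
        · rw [mul_zero]

end AuxMatrix

lemma EX_eq_FF {V : Type*} [Fintype V] [DecidableEq V] (N : InfoNetwork V)
    (hacyc : N.Acyclic) (A Ahat : Set V)
    (hA : A ⊆ {x : V | x ≠ N.d}) (hAhat : Ahat ⊆ {x : V | x ≠ N.d})
    (hdisj : Disjoint A Ahat) (T : ℕ) :
    ∀ t, t ≤ T → ∀ v : V,
      N.EX A Ahat t v =
        (∑ u : V, A.indicator (fun u =>
          (Matrix.of (transB N T Ahat) ^ t) (Sum.inl v) (Sum.inl u)) u) +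
        (∑ y : V, Ahat.indicator (fun y => ∑ i ∈ Finset.range (t + 1),
          (Matrix.of (transB N T Ahat) ^ i) (Sum.inl v) (Sum.inl y)) y) := by
  classical
  have hdA : N.d ∉ A := fun h => (hA h) rfl
  have hdAhat : N.d ∉ Ahat := fun h => (hAhat h) rfl
  intro t
  induction t with
  | zero =>
    intro _ v
    have e1 : (∑ u : V, A.indicator (fun u =>
        (Matrix.of (transB N T Ahat) ^ 0) (Sum.inl v) (Sum.inl u)) u)
        = if v ∈ A then (1:ℝ) else 0 := by
      refine (Finset.sum_eq_single v ?_ ?_).trans ?_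
      · intro u _ hu
        by_cases h : u ∈ A
        · rw [Set.indicator_of_mem h, pow_zero]
          exact Matrix.one_apply_ne (by
            simp only [ne_eq, Sum.inl.injEq]
            exact fun he => hu he.symm)
        · rw [Set.indicator_of_notMem h]
      · intro h; exact absurd (Finset.mem_univ v) h
      · by_cases h : v ∈ A
        · rw [Set.indicator_of_mem h, pow_zero, Matrix.one_apply_eq, if_pos h]
        · rw [Set.indicator_of_notMem h, if_neg h]
    have e2 : (∑ y : V, Ahat.indicator (fun y => ∑ i ∈ Finset.range (0 + 1),
        (Matrix.of (transB N T Ahat) ^ i) (Sum.inl v) (Sum.inl y)) y)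
        = if v ∈ Ahat then (1:ℝ) else 0 := by
      refine (Finset.sum_eq_single v ?_ ?_).trans ?_
      · intro y _ hy
        by_cases h : y ∈ Ahat
        · rw [Set.indicator_of_mem h]
          simp only [zero_add, Finset.sum_range_one, pow_zero]
          exact Matrix.one_apply_ne (by
            simp only [ne_eq, Sum.inl.injEq]
            exact fun he => hy he.symm)
        · rw [Set.indicator_of_notMem h]
      · intro h; exact absurd (Finset.mem_univ v) h
      · by_cases h : v ∈ Ahat
        · rw [Set.indicator_of_mem h, if_pos h]
          simp only [zero_add, Finset.sum_range_one, pow_zero, Matrix.one_apply_eq]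
        · rw [Set.indicator_of_notMem h, if_neg h]
    rw [N.EX_zero A Ahat hdisj v, e1, e2]
  | succ t ih =>
    intro htT v
    have htT' : t ≤ T := Nat.le_of_succ_le htT
    by_cases hvd : v = N.d
    · subst hvd
      have e1 : (∑ u : V, A.indicator (fun u =>
          (Matrix.of (transB N T Ahat) ^ (t+1)) (Sum.inl N.d) (Sum.inl u)) u) = 0 :=
        Finset.sum_eq_zero fun u _ => by
          by_cases h : u ∈ A
          · rw [Set.indicator_of_mem h, pow_transB_row_d N T Ahat hdAhat,
              if_neg (by
                simp only [Sum.inl.injEq]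
                exact fun hh => hdA (hh ▸ h))]
          · rw [Set.indicator_of_notMem h]
      have e2 : (∑ y : V, Ahat.indicator (fun y => ∑ i ∈ Finset.range (t + 1 + 1),
          (Matrix.of (transB N T Ahat) ^ i) (Sum.inl N.d) (Sum.inl y)) y) = 0 :=
        Finset.sum_eq_zero fun y _ => by
          by_cases h : y ∈ Ahat
          · rw [Set.indicator_of_mem h]
            exact Finset.sum_eq_zero fun i _ => by
              rw [pow_transB_row_d N T Ahat hdAhat,
                if_neg (by
                  simp only [Sum.inl.injEq]
                  exact fun hh => hdAhat (hh ▸ h))]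
          · rw [Set.indicator_of_notMem h]
      rw [N.EX_d A Ahat hdA hdAhat (t+1), e1, e2]
      norm_num
    · by_cases hvA : v ∈ Ahat
      · have e1 : (∑ u : V, A.indicator (fun u =>
            (Matrix.of (transB N T Ahat) ^ (t+1)) (Sum.inl v) (Sum.inl u)) u) = 0 :=
          Finset.sum_eq_zero fun u _ => by
            by_cases h : u ∈ A
            · rw [Set.indicator_of_mem h]
              exact pow_transB_Ahat_inl N T Ahat hvA (Nat.succ_le_succ (Nat.zero_le t)) htT u
            · rw [Set.indicator_of_notMem h]
        have e2 : (∑ y : V, Ahat.indicator (fun y => ∑ i ∈ Finset.range (t + 1 + 1),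
            (Matrix.of (transB N T Ahat) ^ i) (Sum.inl v) (Sum.inl y)) y) = 1 := by
          refine (Finset.sum_eq_single v ?_ ?_).trans ?_
          · intro y _ hy
            by_cases h : y ∈ Ahat
            · rw [Set.indicator_of_mem h]
              refine Finset.sum_eq_zero fun i hi => ?_
              rcases Nat.eq_zero_or_pos i with rfl | hpos
              · rw [pow_zero]
                exact Matrix.one_apply_ne (by
                  simp only [ne_eq, Sum.inl.injEq]
                  exact fun he => hy he.symm)
              · exact pow_transB_Ahat_inl N T Ahat hvA hpos
                  (by have := Finset.mem_range.mp hi; omega) y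
            · rw [Set.indicator_of_notMem h]
          · intro h; exact absurd (Finset.mem_univ v) h
          · rw [Set.indicator_of_mem hvA, Finset.sum_range_succ']
            have hz : ∑ i ∈ Finset.range (t + 1),
                (Matrix.of (transB N T Ahat) ^ (i+1)) (Sum.inl v) (Sum.inl v) = 0 :=
              Finset.sum_eq_zero fun i hi =>
                pow_transB_Ahat_inl N T Ahat hvA (Nat.succ_le_succ (Nat.zero_le i))
                  (by have := Finset.mem_range.mp hi; omega) v
            rw [hz, zero_add, pow_zero, Matrix.one_apply_eq]
        rw [N.EX_of_mem_Ahat A Ahat (t+1) hvA, e1, e2]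
        norm_num
      · rw [N.EX_succ A Ahat hdA hdAhat hacyc hvd hvA t,
          FF_first_rec N T A Ahat hvA t, FF_second_rec N T Ahat hvA t,
          ← Finset.sum_add_distrib]
        apply Finset.sum_congr rfl
        intro w _
        rw [ih htT' w, mul_add]

/-- in an acyclic network with disjoint transient and permanent initial sets
`A` and `Ahat`, for a non-void node `v` and a time `1 ≤ t ≤ T`,
`E[X^t_v(A,Ahat)] = ∑_{u ∈ A} (b̄^t) v u + ∑_{y ∈ Ahat} ∑_{i=0}^t (b̄^i) v y`,
where `b̄` is the transition matrix of the transformed network `Ḡ(Ahat)`. -/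
theorem EX_eq_transformed_walk {V : Type*} [Fintype V] [DecidableEq V] (N : InfoNetwork V)
    (hacyc : N.Acyclic) (A Ahat : Set V)
    (hA : A ⊆ {x : V | x ≠ N.d}) (hAhat : Ahat ⊆ {x : V | x ≠ N.d})
    (hdisj : Disjoint A Ahat)
    (T : ℕ) (hT : 1 ≤ T) (t : ℕ) (ht1 : 1 ≤ t) (htT : t ≤ T) (v : V) (hv : v ≠ N.d) :
    N.EX A Ahat t v =
      (∑ u : V, A.indicator (fun u =>
        (Matrix.of (transNet N T hT Ahat (fun h => hAhat h rfl)).b ^ t)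
          (Sum.inl v) (Sum.inl u)) u) +
      (∑ y : V, Ahat.indicator (fun y => ∑ i ∈ Finset.range (t + 1),
        (Matrix.of (transNet N T hT Ahat (fun h => hAhat h rfl)).b ^ i)
          (Sum.inl v) (Sum.inl y)) y) := by
  have hb : (transNet N T hT Ahat (fun h => hAhat h rfl)).b = transB N T Ahat := rfl
  rw [hb]
  exact EX_eq_FF N hacyc A Ahat hA hAhat hdisj T t htT v
end

section
/- Let (V,d,b) be an information network, Â ⊆ V\{d}, and let Ḡ(Â) be the transformed network with transition matrix b̄. Then for every v ∈ V, every y ∈ Â, every 1 ≤ i ≤ T and every t ≥ 0: (b̄^t) v (y,i) = (b̄^{t−i}) v y if t ≥ i, and (b̄^t) v (y,i) = 0 if t < i, where (y,i) denotes the i-th dummy node of the chain attached to y. -/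
open MeasureTheory

open scoped Classical

lemma transformed_dummy_entry_aux {V : Type*} [Fintype V] [DecidableEq V] (N : InfoNetwork V)
    (T : ℕ) (hT : 1 ≤ T) (Ahat : Set V) (hd : N.d ∉ Ahat)
    (v : V) (y : V) (hy : y ∈ Ahat) :
    ∀ (j : ℕ) (hj : j < T) (t : ℕ),
      (Matrix.of (transNet N T hT Ahat hd).b ^ t) (Sum.inl v) (Sum.inr (y, ⟨j, hj⟩)) =
        if j + 1 ≤ t then
          (Matrix.of (transNet N T hT Ahat hd).b ^ (t - (j + 1))) (Sum.inl v) (Sum.inl y)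
        else 0 := by
  set M : Matrix (V ⊕ V × Fin T) (V ⊕ V × Fin T) ℝ :=
    Matrix.of (transNet N T hT Ahat hd).b with hM
  have hMval : ∀ a b, M a b = transB N T Ahat a b := fun a b => rfl
  intro j
  induction j with
  | zero =>
    intro hj t
    cases t with
    | zero =>
      simp [Matrix.one_apply]
    | succ t =>
      rw [pow_succ, Matrix.mul_apply, Fintype.sum_sum_type]
      have e2 : (∑ x : V × Fin T,
          (M ^ t) (Sum.inl v) (Sum.inr x) * M (Sum.inr x) (Sum.inr (y, ⟨0, hj⟩))) = 0 := by
        apply Finset.sum_eq_zero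
        rintro ⟨a, b⟩ -
        rw [hMval]
        simp only [transB]
        rw [if_neg (by rintro ⟨-, h⟩; simp at h)]
        ring
      rw [e2, add_zero]
      rw [Finset.sum_eq_single y]
      · rw [hMval]
        simp [transB, hy]
      · rintro u - hu
        rw [hMval]
        simp only [transB]
        rw [if_neg (by rintro ⟨-, h, -⟩; exact hu h.symm)]
        ring
      · intro h; exact absurd (Finset.mem_univ _) h
  | succ j ih =>
    intro hj t
    have hj' : j < T := by omega
    cases t with
    | zero =>
      simp [Matrix.one_apply]
    | succ t =>
      rw [pow_succ, Matrix.mul_apply, Fintype.sum_sum_type]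
      have e1 : (∑ u : V,
          (M ^ t) (Sum.inl v) (Sum.inl u) * M (Sum.inl u) (Sum.inr (y, ⟨j + 1, hj⟩))) = 0 := by
        apply Finset.sum_eq_zero
        rintro u -
        rw [hMval]
        simp only [transB]
        rw [if_neg (by rintro ⟨-, -, h⟩; simp at h)]
        ring
      rw [e1, zero_add]
      rw [Finset.sum_eq_single ((y, ⟨j, hj'⟩) : V × Fin T)]
      · rw [hMval]
        simp only [transB]
        rw [if_pos (by simp), mul_one, ih hj' t]
        by_cases hle : j + 1 ≤ t
        · rw [if_pos hle, if_pos (show j + 1 + 1 ≤ t + 1 by omega),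
            show t + 1 - (j + 1 + 1) = t - (j + 1) by omega]
        · rw [if_neg hle, if_neg (show ¬ (j + 1 + 1 ≤ t + 1) by omega)]
      · rintro ⟨a, b⟩ - hne
        rw [hMval]
        simp only [transB]
        rw [if_neg ?_]
        · ring
        rintro ⟨h1, h2⟩
        refine hne ?_
        simp only [Prod.mk.injEq]
        exact ⟨h1.symm, Fin.ext (by simp only [Fin.val_mk]; omega)⟩
      · intro h; exact absurd (Finset.mem_univ _) h

/-- for every `v ∈ V`, `y ∈ Ahat`, `1 ≤ i ≤ T` and `t ≥ 0`, the entry of the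
`t`-th power of the transition matrix `b̄` of the transformed network at `(v, (y,i))`, where
`(y,i)` is the `i`-th dummy node of the chain attached to `y`, equals `(b̄^{t-i}) v y` if
`t ≥ i` and `0` otherwise. -/
theorem transformed_dummy_entry {V : Type*} [Fintype V] [DecidableEq V] (N : InfoNetwork V)
    (T : ℕ) (hT : 1 ≤ T) (Ahat : Set V) (hAhat : Ahat ⊆ {x : V | x ≠ N.d})
    (v : V) (y : V) (hy : y ∈ Ahat) (i : ℕ) (hi1 : 1 ≤ i) (hiT : i ≤ T) (t : ℕ) :
    (Matrix.of (transNet N T hT Ahat (fun h => hAhat h rfl)).b ^ t)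
        (Sum.inl v) (Sum.inr (y, ⟨i - 1, by omega⟩)) =
      if i ≤ t then
        (Matrix.of (transNet N T hT Ahat (fun h => hAhat h rfl)).b ^ (t - i))
          (Sum.inl v) (Sum.inl y)
      else 0 := by
  rw [transformed_dummy_entry_aux N T hT Ahat (fun h => hAhat h rfl) v y hy (i - 1) (by omega) t]
  have : i - 1 + 1 = i := by omega
  rw [this]
end
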